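/- Let Σ ∈ ℝ^{d×d} be symmetric positive definite and D ∈ ℝ^{d×d} symmetric positive semidefinite, and let γ ∈ ℝ be such that γ I_d − D is positive definite. Then the matrix L(γ) = γ² (γ I_d − D)^{-1} Σ (γ I_d − D)^{-1} satisfies B(L(γ)) = Tr(Σ (I_d − γ (γ I_d − D)^{-1})²). -/

import Mathlib

/-!
Write `R = Σ^{1/2}` and `A = γ (γ I − D)⁻¹`, which is positive semidefinite because
`γ I = (γ I − D) + D ≻ 0` forces `γ > 0`. Then `L(γ) = A Σ A`, so `R L(γ) R = (R A R)²` with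
`R A R ⪰ 0`, and the outer square root is just `R A R`. By cyclicity of the trace,
`Tr(L(γ) + Σ − 2 R A R) = Tr(Σ A²) + Tr Σ − 2 Tr(Σ A) = Tr(Σ (I − A)²)`.
-/

open Matrix

-- `msqrt M` is the unique symmetric PSD square root of a symmetric PSD matrix `M` (else `0`).
open Classical in
noncomputable def msqrt {ι : Type*} [Fintype ι] [DecidableEq ι] (M : Matrix ι ι ℝ) : Matrix ι ι ℝ :=
  if h : M.PosSemidef then
    (h.1.eigenvectorUnitary : Matrix ι ι ℝ) * diagonal ((↑) ∘ Real.sqrt ∘ h.1.eigenvalues) *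
      (star (h.1.eigenvectorUnitary : Matrix ι ι ℝ))
  else 0

/-- `Bdist Sg S = Tr(S + Σ − 2(Σ^{1/2} S Σ^{1/2})^{1/2})`. -/
noncomputable def Bdist {ι : Type*} [Fintype ι] [DecidableEq ι] (Sg S : Matrix ι ι ℝ) : ℝ :=
  (S + Sg - (2:ℝ) • msqrt (msqrt Sg * S * msqrt Sg)).trace

open scoped MatrixOrder

variable {ι : Type*} [Fintype ι] [DecidableEq ι]

lemma msqrt_eq_cfcSqrt {M : Matrix ι ι ℝ} (hM : M.PosSemidef) : msqrt M = CFC.sqrt M := by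
  rw [msqrt, dif_pos hM, CFC.sqrt_eq_cfc, cfc_nnreal_eq_real _ M, hM.1.cfc_eq, IsHermitian.cfc]
  congr 3
  funext i
  simp [max_eq_left (hM.eigenvalues_nonneg i)]

lemma msqrt_mul_self {N : Matrix ι ι ℝ} (hN : N.PosSemidef) : msqrt (N * N) = N := by
  have hNN : (N * N).PosSemidef := by
    simpa only [hN.1.eq] using posSemidef_conjTranspose_mul_self N
  rw [msqrt_eq_cfcSqrt hNN, CFC.sqrt_mul_self N (nonneg_iff_posSemidef.mpr hN)]

lemma Bdist_mul_mul_self {Sg A : Matrix ι ι ℝ} (hSg : Sg.PosSemidef) (hA : A.PosSemidef) :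
    Bdist Sg (A * Sg * A) = (Sg * (1 - A) ^ 2).trace := by
  set R := CFC.sqrt Sg
  have hR : R.PosSemidef := nonneg_iff_posSemidef.mp (CFC.sqrt_nonneg Sg)
  have hRR : R * R = Sg := CFC.sqrt_mul_sqrt_self Sg (nonneg_iff_posSemidef.mpr hSg)
  have hRAR : (R * A * R).PosSemidef := by
    simpa only [hR.1.eq] using hA.conjTranspose_mul_mul_same R
  have hinner : R * (A * Sg * A) * R = (R * A * R) * (R * A * R) := by
    simp only [← hRR, Matrix.mul_assoc]
  rw [Bdist, msqrt_eq_cfcSqrt hSg, hinner, msqrt_mul_self hRAR]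
  have htrace_RAR : (R * A * R).trace = (Sg * A).trace := by
    rw [trace_mul_comm, ← Matrix.mul_assoc, hRR, trace_mul_comm]
  have htrace_ASgA : (A * Sg * A).trace = (Sg * (A * A)).trace := by
    rw [Matrix.mul_assoc, trace_mul_comm, Matrix.mul_assoc]
  rw [trace_sub, trace_add, trace_smul, htrace_RAR, htrace_ASgA]
  simp only [sq, Matrix.mul_sub, Matrix.sub_mul, Matrix.mul_one, Matrix.one_mul,
    trace_sub, smul_eq_mul]
  ring

/-- For `γ I − D ≻ 0`, `L(γ) = γ² (γI − D)⁻¹ Σ (γI − D)⁻¹` satisfies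
`B(L(γ)) = Tr(Σ (I − γ(γI − D)⁻¹)²)`. -/
theorem stmt4 {d : ℕ} [NeZero d] (Sg D : Matrix (Fin d) (Fin d) ℝ)
    (hSg : Sg.PosDef) (hD : D.PosSemidef)
    (γ : ℝ) (hγ : (γ • (1 : Matrix (Fin d) (Fin d) ℝ) - D).PosDef) :
    Bdist Sg (γ ^ 2 • ((γ • (1 : Matrix (Fin d) (Fin d) ℝ) - D)⁻¹ * Sg *
        (γ • (1 : Matrix (Fin d) (Fin d) ℝ) - D)⁻¹)) =
      (Sg * (1 - γ • (γ • (1 : Matrix (Fin d) (Fin d) ℝ) - D)⁻¹) ^ 2).trace := by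
  have hγ_pos : 0 < γ := by
    have h : (γ • (1 : Matrix (Fin d) (Fin d) ℝ)).PosDef := by
      simpa using hγ.add_posSemidef hD
    simpa using h.diag_pos (i := 0)
  have hA : (γ • (γ • (1 : Matrix (Fin d) (Fin d) ℝ) - D)⁻¹).PosSemidef :=
    hγ.inv.posSemidef.smul hγ_pos.le
  rw [← Bdist_mul_mul_self hSg.posSemidef hA]
  simp only [Matrix.smul_mul, Matrix.mul_smul, smul_smul, sq]
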